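/- arXiv:2404.13283 — 6 statements merged into one kernel-verified Lean document; each statement's English description precedes it below -/
import Mathlib

section
/- Let n be a positive integer, let A and B be n×n complex matrices, and let σ > 0 be a real number. Set M = [[A, (1/σ)B], [−B, A]] (a 2n×2n block matrix) and M̄ = [[A + (i/√σ)B, 0], [0, A − (i/√σ)B]]. Then the block matrix X = [[I, I], [i√σ I, −i√σ I]] is invertible and satisfies M·X = X·M̄; in particular M is similar to M̄. -/
/-!
With `c = i√σ` and `d = i/√σ` one has `c / σ = d` and `c d = -1`. These two scalar identities
are all that the block computation `M X = X M̄` needs: the columns of `X` are the vectors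
`(v, ± c v)`, on which `M` acts as `A ± d B`. Moreover `X` is invertible because, by the Schur
complement of its identity block, `det X = (-2c)ⁿ ≠ 0`.
-/

namespace Matrix

variable {ι R : Type*} [Fintype ι] [DecidableEq ι] [CommRing R]

theorem isUnit_fromBlocks_one_one_smul_one {c : R} (hc : IsUnit (2 * c)) :
    IsUnit (fromBlocks 1 1 (c • 1) (-(c • 1)) : Matrix (ι ⊕ ι) (ι ⊕ ι) R) := by
  have hschur : -(c • 1) - c • 1 * (1 : Matrix ι ι R) = (-(2 * c)) • 1 := by
    rw [Matrix.mul_one, neg_smul, two_mul, add_smul]; abel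
  rw [isUnit_iff_isUnit_det, det_fromBlocks_one₁₁, hschur, det_smul, det_one, mul_one]
  exact hc.neg.pow _

theorem fromBlocks_mul_fromBlocks_one_one_smul_one (A B : Matrix ι ι R) {t c d : R}
    (hct : c * t = d) (hcd : c * d = -1) :
    fromBlocks A (t • B) (-B) A * fromBlocks 1 1 (c • 1) (-(c • 1)) =
      fromBlocks 1 1 (c • 1) (-(c • 1)) * fromBlocks (A + d • B) 0 0 (A - d • B) := by
  simp only [fromBlocks_multiply, Matrix.mul_one, Matrix.one_mul, Matrix.mul_smul,
    Matrix.smul_mul, Matrix.mul_neg, Matrix.neg_mul, smul_smul, hct, Matrix.mul_zero,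
    add_zero, zero_add, smul_add, smul_sub, hcd]
  congr 1 <;> module

end Matrix

/-- With `M = [[A, (1/σ)B], [−B, A]]` and
`M̄ = [[A + (i/√σ)B, 0], [0, A − (i/√σ)B]]`, the block matrix
`X = [[I, I], [i√σ I, −i√σ I]]` is invertible and satisfies `M·X = X·M̄`. -/
theorem stmt0 (n : ℕ) (A B : Matrix (Fin n) (Fin n) ℂ) (σ : ℝ) (hσ : 0 < σ)
    (M Mbar X : Matrix (Fin n ⊕ Fin n) (Fin n ⊕ Fin n) ℂ)
    (hM : M = Matrix.fromBlocks A ((1 / (σ : ℂ)) • B) (-B) A)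
    (hMbar : Mbar = Matrix.fromBlocks (A + (Complex.I / (Real.sqrt σ : ℂ)) • B) 0 0
        (A - (Complex.I / (Real.sqrt σ : ℂ)) • B))
    (hX : X = Matrix.fromBlocks (1 : Matrix (Fin n) (Fin n) ℂ) 1
        ((Complex.I * (Real.sqrt σ : ℂ)) • 1) (-((Complex.I * (Real.sqrt σ : ℂ)) • 1))) :
    IsUnit X ∧ M * X = X * Mbar := by
  have hs : (Real.sqrt σ : ℂ) ≠ 0 := Complex.ofReal_ne_zero.mpr (Real.sqrt_pos.mpr hσ).ne'
  have hsq : (σ : ℂ) = Real.sqrt σ * Real.sqrt σ := by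
    exact_mod_cast (Real.mul_self_sqrt hσ.le).symm
  subst hM hMbar hX
  refine ⟨Matrix.isUnit_fromBlocks_one_one_smul_one ?_,
    Matrix.fromBlocks_mul_fromBlocks_one_one_smul_one A B ?_ ?_⟩
  · exact (mul_ne_zero two_ne_zero (mul_ne_zero Complex.I_ne_zero hs)).isUnit
  · rw [hsq]; field_simp
  · field_simp; simp
end

section
/- Let 0 < α < 1 and let 0 = t_0 < t_1 < ⋯ < t_n be strictly increasing real mesh nodes. For 1 ≤ j ≤ m ≤ n define d_{m,j} := ((t_m − t_{m−j})^{1−α} − (t_m − t_{m−j+1})^{1−α})/(t_{m−j+1} − t_{m−j}). Then for every m with 1 ≤ m ≤ n and every j with 1 ≤ j ≤ m − 1, one has 0 < d_{m,j+1} < d_{m,j}. -/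
/-!
`d_{m,j}` is the slope of the secant of `x ↦ x ^ (1 - α)` over `[t_m - t_{m-j+1}, t_m - t_{m-j}]`.
For fixed `m` these intervals are adjacent, lie in `[0, ∞)`, and move to the right as `j` grows,
so the claim is that secant slopes of a strictly increasing, strictly concave function are
positive and strictly decreasing along adjacent intervals.
-/

/-- The L1 coefficients `d_{m,j}` built from a mesh `t` and fractional order `α`. -/
noncomputable def l1Coeff (α : ℝ) (t : ℕ → ℝ) (m j : ℕ) : ℝ :=
  ((t m - t (m - j)) ^ (1 - α) - (t m - t (m - j + 1)) ^ (1 - α)) /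
    (t (m - j + 1) - t (m - j))

open Set

lemma l1Coeff_eq_slope (α : ℝ) (t : ℕ → ℝ) (m j : ℕ) :
    l1Coeff α t m j =
      slope (fun x : ℝ => x ^ (1 - α)) (t m - t (m - j + 1)) (t m - t (m - j)) := by
  rw [l1Coeff, slope_def_field]
  congr 1
  ring

namespace Real

lemma slope_rpow_pos {p a b : ℝ} (hp : 0 < p) (ha : 0 ≤ a) (hab : a < b) :
    0 < slope (fun x : ℝ => x ^ p) a b := by
  rw [slope_def_field]
  exact div_pos (sub_pos.2 (rpow_lt_rpow ha hab hp)) (sub_pos.2 hab)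

lemma slope_rpow_lt_slope_rpow {p x y z : ℝ} (hp₀ : 0 < p) (hp₁ : p < 1) (hx : 0 ≤ x)
    (hxy : x < y) (hyz : y < z) :
    slope (fun x : ℝ => x ^ p) y z < slope (fun x : ℝ => x ^ p) x y := by
  simp only [slope_def_field]
  exact (strictConcaveOn_rpow hp₀ hp₁).slope_anti_adjacent hx
    (mem_Ici.2 (hx.trans (hxy.trans hyz).le)) hxy hyz

end Real

theorem stmt3_general (α : ℝ) (hα0 : 0 < α) (hα1 : α < 1) (n : ℕ) (t : ℕ → ℝ)
    (hmono : ∀ i, i < n → t i < t (i + 1)) :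
    ∀ m, 1 ≤ m → m ≤ n → ∀ j, 1 ≤ j → j ≤ m - 1 →
      0 < l1Coeff α t m (j + 1) ∧ l1Coeff α t m (j + 1) < l1Coeff α t m j := by
  intro m _ hmn j _ hjm
  have ht : StrictMonoOn t (Iic n) := strictMonoOn_Iic_of_lt_succ hmono
  have hmem : ∀ {i}, i ≤ m → i ∈ Iic n := fun hi => mem_Iic.2 (hi.trans hmn)
  rw [l1Coeff_eq_slope, l1Coeff_eq_slope, show m - (j + 1) + 1 = m - j by omega]
  have hz : 0 ≤ t m - t (m - j + 1) :=
    sub_nonneg.2 (ht.monotoneOn (hmem (by omega)) (hmem le_rfl) (by omega))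
  have hzy : t m - t (m - j + 1) < t m - t (m - j) :=
    sub_lt_sub_left (ht (hmem (by omega)) (hmem (by omega)) (by omega)) _
  have hyx : t m - t (m - j) < t m - t (m - (j + 1)) :=
    sub_lt_sub_left (ht (hmem (by omega)) (hmem (by omega)) (by omega)) _
  exact ⟨Real.slope_rpow_pos (by linarith) (hz.trans hzy.le) hyx,
    Real.slope_rpow_lt_slope_rpow (by linarith) (by linarith) hz hzy hyx⟩

/-- For `0 < α < 1` and a strictly increasing mesh `0 = t₀ < t₁ < ⋯ < tₙ`,
the L1 coefficients satisfy `0 < d_{m,j+1} < d_{m,j}` for `1 ≤ m ≤ n`, `1 ≤ j ≤ m − 1`. -/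
theorem stmt3 (α : ℝ) (hα0 : 0 < α) (hα1 : α < 1) (n : ℕ) (t : ℕ → ℝ)
    (ht0 : t 0 = 0) (hmono : ∀ i, i < n → t i < t (i + 1)) :
    ∀ m, 1 ≤ m → m ≤ n → ∀ j, 1 ≤ j → j ≤ m - 1 →
      0 < l1Coeff α t m (j + 1) ∧ l1Coeff α t m (j + 1) < l1Coeff α t m j :=
  stmt3_general α hα0 hα1 n t hmono
end

section
/- Let a > 0, b > 0 and λ > 0 be real numbers, and let z be a complex number with Re(z) ≥ λ. Then |sinh((b − a)z)/(sinh(bz)·cosh(az))| ≤ cosh((b − a)λ)/(sinh(aλ)·sinh(bλ)). -/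
/-!
Since `‖exp w‖ = exp (Re w)`, the triangle inequality bounds `‖sinh w‖` above by `cosh (Re w)`,
and both `‖sinh w‖` and `‖cosh w‖` below by `sinh (Re w)`; this reduces the claim to the real
bound at `x = Re z`. Writing `2 sinh (a x) sinh (b x) = cosh ((a + b) x) - cosh ((b - a) x)`,
that real bound is `2 / (cosh ((a + b) x) / cosh ((b - a) x) - 1)`, which decreases in `x`
because `cosh (d x) / cosh (c x)` increases for `|c| ≤ d`.
-/

namespace Complex

theorem norm_sinh_le_cosh_re (w : ℂ) : ‖sinh w‖ ≤ Real.cosh w.re := by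
  rw [sinh, Real.cosh_eq, norm_div, Complex.norm_two]
  gcongr
  calc ‖exp w - exp (-w)‖ ≤ ‖exp w‖ + ‖exp (-w)‖ := norm_sub_le _ _
    _ = Real.exp w.re + Real.exp (-w.re) := by rw [norm_exp, norm_exp, neg_re]

theorem sinh_re_le_norm_sinh (w : ℂ) : Real.sinh w.re ≤ ‖sinh w‖ := by
  rw [sinh, Real.sinh_eq, norm_div, Complex.norm_two]
  gcongr
  calc Real.exp w.re - Real.exp (-w.re) = ‖exp w‖ - ‖exp (-w)‖ := by
        rw [norm_exp, norm_exp, neg_re]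
    _ ≤ ‖exp w - exp (-w)‖ := norm_sub_norm_le _ _

theorem sinh_re_le_norm_cosh (w : ℂ) : Real.sinh w.re ≤ ‖cosh w‖ := by
  rw [cosh, Real.sinh_eq, norm_div, Complex.norm_two]
  gcongr
  calc Real.exp w.re - Real.exp (-w.re) = ‖exp w‖ - ‖-exp (-w)‖ := by
        rw [norm_neg, norm_exp, norm_exp, neg_re]
    _ ≤ ‖exp w - -exp (-w)‖ := norm_sub_norm_le _ _
    _ = ‖exp w + exp (-w)‖ := by rw [sub_neg_eq_add]

end Complex

namespace Real

theorem two_mul_sinh_mul_sinh (u v : ℝ) :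
    2 * (sinh u * sinh v) = cosh (u + v) - cosh (u - v) := by
  rw [cosh_add, cosh_sub]; ring

theorem cosh_mul_mul_cosh_mul_le {c d l x : ℝ} (hcd : |c| ≤ d) (hl : 0 ≤ l) (hlx : l ≤ x) :
    cosh (c * x) * cosh (d * l) ≤ cosh (c * l) * cosh (d * x) := by
  obtain ⟨hc₁, hc₂⟩ := abs_le.mp hcd
  have hsum : cosh (c * x + d * l) ≤ cosh (d * x + c * l) := by
    rw [cosh_le_cosh]
    exact abs_le_abs (by nlinarith) (by nlinarith)
  have hdiff : cosh (c * x - d * l) ≤ cosh (d * x - c * l) := by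
    rw [cosh_le_cosh]
    exact abs_le_abs (by nlinarith) (by nlinarith)
  have hl' : 2 * (cosh (c * x) * cosh (d * l)) = cosh (c * x + d * l) + cosh (c * x - d * l) := by
    rw [cosh_add, cosh_sub]; ring
  have hr' : 2 * (cosh (c * l) * cosh (d * x)) = cosh (d * x + c * l) + cosh (d * x - c * l) := by
    rw [cosh_add, cosh_sub]; ring
  linarith

theorem cosh_div_sinh_mul_sinh_le {a b l x : ℝ} (ha : 0 < a) (hb : 0 < b) (hl : 0 < l)
    (hlx : l ≤ x) :
    cosh ((b - a) * x) / (sinh (a * x) * sinh (b * x)) ≤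
      cosh ((b - a) * l) / (sinh (a * l) * sinh (b * l)) := by
  have hx : 0 < x := hl.trans_le hlx
  have hsinh_pos : ∀ {c t : ℝ}, 0 < c → 0 < t → 0 < sinh (c * t) := fun hc ht ↦
    sinh_pos_iff.mpr (mul_pos hc ht)
  rw [div_le_div_iff₀ (mul_pos (hsinh_pos ha hx) (hsinh_pos hb hx))
    (mul_pos (hsinh_pos ha hl) (hsinh_pos hb hl))]
  have hprod : ∀ t, 2 * (sinh (a * t) * sinh (b * t)) = cosh ((a + b) * t) - cosh ((b - a) * t) :=
    fun t ↦ by rw [mul_comm (sinh _), two_mul_sinh_mul_sinh]; ring_nf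
  have key := cosh_mul_mul_cosh_mul_le (c := b - a) (d := a + b)
    (abs_le.mpr ⟨by linarith, by linarith⟩) hl.le hlx
  linear_combination key / 2 + cosh ((b - a) * x) / 2 * hprod l - cosh ((b - a) * l) / 2 * hprod x

end Real

/-- For `a, b, λ > 0` and `Re(z) ≥ λ`,
`|sinh((b−a)z)/(sinh(bz)cosh(az))| ≤ cosh((b−a)λ)/(sinh(aλ)sinh(bλ))`. -/
theorem stmt12 (a b lam : ℝ) (ha : 0 < a) (hb : 0 < b) (hlam : 0 < lam)
    (z : ℂ) (hz : lam ≤ z.re) :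
    ‖Complex.sinh (((b : ℂ) - (a : ℂ)) * z) /
        (Complex.sinh ((b : ℂ) * z) * Complex.cosh ((a : ℂ) * z))‖ ≤
      Real.cosh ((b - a) * lam) / (Real.sinh (a * lam) * Real.sinh (b * lam)) := by
  have hx : 0 < z.re := hlam.trans_le hz
  have hnum := Complex.norm_sinh_le_cosh_re (((b : ℂ) - (a : ℂ)) * z)
  have hsinh := Complex.sinh_re_le_norm_sinh ((b : ℂ) * z)
  have hcosh := Complex.sinh_re_le_norm_cosh ((a : ℂ) * z)
  rw [← Complex.ofReal_sub] at hnum ⊢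
  rw [Complex.re_ofReal_mul] at hnum hsinh hcosh
  calc _ ≤ Real.cosh ((b - a) * z.re) / (Real.sinh (a * z.re) * Real.sinh (b * z.re)) := by
        rw [norm_div, norm_mul, mul_comm (Real.sinh _)]
        have := Real.sinh_pos_iff.mpr (mul_pos ha hx)
        have := Real.sinh_pos_iff.mpr (mul_pos hb hx)
        gcongr
    _ ≤ _ := Real.cosh_div_sinh_mul_sinh_le ha hb hlam hz
end

section
/- Let N ≥ 1, let κ₁, κ₂, h₁, h₂ > 0 be real numbers, set a = h₁/√κ₁ and b = h₂/√κ₂, and let P be an invertible N×N complex matrix. Let λ₁, …, λ_N be complex numbers and λ > 0 a real number such that Re(√λ_i) ≥ λ for every i, where √λ_i denotes the principal square root. Let W be the diagonal matrix with entries W_{ii} = sinh((b − a)√λ_i)/(sinh(b√λ_i)·cosh(a√λ_i)), and let (Π⁽ᵏ⁾)_{k ≥ 0} be a sequence of vectors in ℂᴺ satisfying Π⁽ᵏ⁾ = −(√κ₁/(√κ₁ + √κ₂))·P·W·P⁻¹·Π⁽ᵏ⁻¹⁾ for all k ≥ 1. Then for every k ≥ 0, ‖Π⁽ᵏ⁾‖_∞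 ≤ (√κ₁/(√κ₁ + √κ₂))ᵏ · (cosh((b − a)λ)/(sinh(aλ)·sinh(bλ)))ᵏ · ‖P‖_∞ · ‖P⁻¹‖_∞ · ‖Π⁽⁰⁾‖_∞. -/
/-- The supremum norm `‖v‖_∞ = max_i |v_i|` of a vector `v ∈ ℂᴺ`. -/
noncomputable def vecNormInf {N : ℕ} (v : Fin N → ℂ) : ℝ :=
  ((Finset.univ.sup fun i => ‖v i‖₊ : NNReal) : ℝ)

/-- The induced ℓ∞ operator norm of a complex matrix: the maximum over rows of the
sum of absolute values of the entries. -/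
noncomputable def matNormInf {N : ℕ} (M : Matrix (Fin N) (Fin N) ℂ) : ℝ :=
  ((Finset.univ.sup fun i => ∑ j, ‖M i j‖₊ : NNReal) : ℝ)

open Complex in
lemma sinh_decomp (z : ℂ) : Complex.sinh z =
    (Real.sinh z.re * Real.cos z.im : ℝ) + (Real.cosh z.re * Real.sin z.im : ℝ) * I := by
  have : z = (z.re : ℂ) + (z.im : ℂ) * I := (re_add_im z).symm
  rw [this]
  push_cast
  rw [Complex.sinh_add, Complex.sinh_mul_I, Complex.cosh_mul_I,
    ← Complex.ofReal_sinh, ← Complex.ofReal_cosh, ← Complex.ofReal_sin, ← Complex.ofReal_cos]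
  simp
  ring

open Complex in
lemma cosh_decomp (z : ℂ) : Complex.cosh z =
    (Real.cosh z.re * Real.cos z.im : ℝ) + (Real.sinh z.re * Real.sin z.im : ℝ) * I := by
  have : z = (z.re : ℂ) + (z.im : ℂ) * I := (re_add_im z).symm
  rw [this]
  push_cast
  rw [Complex.cosh_add, Complex.sinh_mul_I, Complex.cosh_mul_I,
    ← Complex.ofReal_sinh, ← Complex.ofReal_cosh, ← Complex.ofReal_sin, ← Complex.ofReal_cos]
  simp
  ring

lemma norm_sinh_sq' (z : ℂ) : ‖Complex.sinh z‖ ^ 2 =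
    Real.sinh z.re ^ 2 * Real.cos z.im ^ 2 + Real.cosh z.re ^ 2 * Real.sin z.im ^ 2 := by
  rw [Complex.sq_norm, sinh_decomp, Complex.normSq_apply]
  simp [Complex.sinh_ofReal_re, Complex.cosh_ofReal_re, Complex.cos_ofReal_re,
    Complex.sin_ofReal_re]
  ring

lemma norm_cosh_sq' (z : ℂ) : ‖Complex.cosh z‖ ^ 2 =
    Real.cosh z.re ^ 2 * Real.cos z.im ^ 2 + Real.sinh z.re ^ 2 * Real.sin z.im ^ 2 := by
  rw [Complex.sq_norm, cosh_decomp, Complex.normSq_apply]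
  simp [Complex.sinh_ofReal_re, Complex.cosh_ofReal_re, Complex.cos_ofReal_re,
    Complex.sin_ofReal_re]
  ring

lemma norm_sinh_le' (z : ℂ) : ‖Complex.sinh z‖ ≤ Real.cosh z.re := by
  have h := norm_sinh_sq' z
  have h1 := Real.sin_sq_add_cos_sq z.im
  have h2 := Real.cosh_sq z.re
  nlinarith [norm_nonneg (Complex.sinh z), Real.cosh_pos z.re]

lemma sinh_re_le_norm_sinh (z : ℂ) : Real.sinh z.re ≤ ‖Complex.sinh z‖ := by
  have h := norm_sinh_sq' z
  have h1 := Real.sin_sq_add_cos_sq z.im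
  have h2 := Real.cosh_sq z.re
  nlinarith [norm_nonneg (Complex.sinh z), Real.cosh_pos z.re, sq_nonneg (Real.sin z.im)]

lemma sinh_re_le_norm_cosh (z : ℂ) : Real.sinh z.re ≤ ‖Complex.cosh z‖ := by
  have h := norm_cosh_sq' z
  have h1 := Real.sin_sq_add_cos_sq z.im
  have h2 := Real.cosh_sq z.re
  nlinarith [norm_nonneg (Complex.cosh z), Real.cosh_pos z.re]

lemma cosh_mul_cosh' (u v : ℝ) :
    2 * (Real.cosh u * Real.cosh v) = Real.cosh (u + v) + Real.cosh (u - v) := by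
  rw [Real.cosh_add, Real.cosh_sub]; ring

lemma key_ineq (c s lam x : ℝ) (hc : |c| ≤ s) (hlam : 0 < lam) (hx : lam ≤ x) :
    Real.cosh (c * x) * Real.cosh (s * lam) ≤ Real.cosh (s * x) * Real.cosh (c * lam) := by
  wlog hc0 : 0 ≤ c with H
  · have := H (-c) s lam x (by rwa [abs_neg]) hlam hx (by linarith [not_le.mp hc0])
    simpa [Real.cosh_neg, neg_mul] using this
  rw [abs_of_nonneg hc0] at hc
  have hx0 : 0 < x := lt_of_lt_of_le hlam hx
  have hs0 : 0 ≤ s := le_trans hc0 hc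
  have h1 : Real.cosh (c * x + s * lam) ≤ Real.cosh (s * x + c * lam) := by
    rw [Real.cosh_le_cosh]
    rw [abs_of_nonneg (by nlinarith), abs_of_nonneg (by nlinarith)]
    nlinarith
  have h2 : Real.cosh (c * x - s * lam) ≤ Real.cosh (s * x - c * lam) := by
    rw [Real.cosh_le_cosh]
    rw [abs_of_nonneg (show (0:ℝ) ≤ s * x - c * lam by nlinarith)]
    rcases abs_cases (c * x - s * lam) with ⟨h, _⟩ | ⟨h, _⟩ <;> rw [h] <;> nlinarith
  nlinarith [cosh_mul_cosh' (c*x) (s*lam), cosh_mul_cosh' (s*x) (c*lam)]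

lemma sinh_mul_sinh' (u v : ℝ) :
    2 * (Real.sinh u * Real.sinh v) = Real.cosh (u + v) - Real.cosh (u - v) := by
  rw [Real.cosh_add, Real.cosh_sub]; ring

lemma ratio_mono (A B lam x : ℝ) (hA : 0 < A) (hB : 0 < B) (hlam : 0 < lam) (hx : lam ≤ x) :
    Real.cosh ((B - A) * x) / (Real.sinh (A * x) * Real.sinh (B * x)) ≤
      Real.cosh ((B - A) * lam) / (Real.sinh (A * lam) * Real.sinh (B * lam)) := by
  have hx0 : 0 < x := lt_of_lt_of_le hlam hx
  have hs1 : 0 < Real.sinh (A * lam) := Real.sinh_pos_iff.2 (by positivity)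
  have hs2 : 0 < Real.sinh (B * lam) := Real.sinh_pos_iff.2 (by positivity)
  have hs3 : 0 < Real.sinh (A * x) := Real.sinh_pos_iff.2 (by positivity)
  have hs4 : 0 < Real.sinh (B * x) := Real.sinh_pos_iff.2 (by positivity)
  rw [div_le_div_iff₀ (by positivity) (by positivity)]
  have hk := key_ineq (B - A) (A + B) lam x (by rw [abs_le]; constructor <;> linarith) hlam hx
  have e1 := sinh_mul_sinh' (A * lam) (B * lam)
  have e2 := sinh_mul_sinh' (A * x) (B * x)
  have r1 : A * lam - B * lam = -((B - A) * lam) := by ring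
  have r2 : A * x - B * x = -((B - A) * x) := by ring
  have r3 : A * lam + B * lam = (A + B) * lam := by ring
  have r4 : A * x + B * x = (A + B) * x := by ring
  rw [r3, r1, Real.cosh_neg] at e1
  rw [r4, r2, Real.cosh_neg] at e2
  have e1' := congrArg (fun t => Real.cosh ((B - A) * x) * t) e1
  have e2' := congrArg (fun t => Real.cosh ((B - A) * lam) * t) e2
  simp only [mul_sub] at e1' e2'
  nlinarith [hk, e1', e2']

lemma W_entry_bound (A B lam : ℝ) (hA : 0 < A) (hB : 0 < B) (hlam : 0 < lam)
    (z : ℂ) (hz : lam ≤ z.re) :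
    ‖Complex.sinh (((B : ℂ) - (A : ℂ)) * z) /
        (Complex.sinh ((B : ℂ) * z) * Complex.cosh ((A : ℂ) * z))‖ ≤
      Real.cosh ((B - A) * lam) / (Real.sinh (A * lam) * Real.sinh (B * lam)) := by
  have hx0 : 0 < z.re := lt_of_lt_of_le hlam hz
  have hreBA : (((B : ℂ) - (A : ℂ)) * z).re = (B - A) * z.re := by
    simp [Complex.mul_re, Complex.sub_re, Complex.ofReal_re, Complex.ofReal_im]
  have hreB : ((B : ℂ) * z).re = B * z.re := by simp [Complex.mul_re]
  have hreA : ((A : ℂ) * z).re = A * z.re := by simp [Complex.mul_re]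
  have hs1 : 0 < Real.sinh (A * lam) := Real.sinh_pos_iff.2 (by positivity)
  have hs2 : 0 < Real.sinh (B * lam) := Real.sinh_pos_iff.2 (by positivity)
  have hs3 : 0 < Real.sinh (A * z.re) := Real.sinh_pos_iff.2 (by positivity)
  have hs4 : 0 < Real.sinh (B * z.re) := Real.sinh_pos_iff.2 (by positivity)
  have hnum : ‖Complex.sinh (((B : ℂ) - (A : ℂ)) * z)‖ ≤ Real.cosh ((B - A) * z.re) := by
    have := norm_sinh_le' (((B : ℂ) - (A : ℂ)) * z)
    rwa [hreBA] at this
  have hden1 : Real.sinh (B * z.re) ≤ ‖Complex.sinh ((B : ℂ) * z)‖ := by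
    have := sinh_re_le_norm_sinh ((B : ℂ) * z); rwa [hreB] at this
  have hden2 : Real.sinh (A * z.re) ≤ ‖Complex.cosh ((A : ℂ) * z)‖ := by
    have := sinh_re_le_norm_cosh ((A : ℂ) * z); rwa [hreA] at this
  rw [norm_div, norm_mul]
  calc ‖Complex.sinh (((B : ℂ) - (A : ℂ)) * z)‖ /
        (‖Complex.sinh ((B : ℂ) * z)‖ * ‖Complex.cosh ((A : ℂ) * z)‖)
      ≤ Real.cosh ((B - A) * z.re) / (Real.sinh (B * z.re) * Real.sinh (A * z.re)) := by
        apply div_le_div₀ (by positivity) hnum (by positivity)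
        exact mul_le_mul hden1 hden2 (le_of_lt hs3) (norm_nonneg _)
    _ = Real.cosh ((B - A) * z.re) / (Real.sinh (A * z.re) * Real.sinh (B * z.re)) := by
        ring_nf
    _ ≤ Real.cosh ((B - A) * lam) / (Real.sinh (A * lam) * Real.sinh (B * lam)) :=
        ratio_mono A B lam z.re hA hB hlam hz

lemma vecNormInf_nonneg {N : ℕ} (v : Fin N → ℂ) : 0 ≤ vecNormInf v :=
  NNReal.coe_nonneg _

lemma matNormInf_nonneg {N : ℕ} (M : Matrix (Fin N) (Fin N) ℂ) : 0 ≤ matNormInf M :=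
  NNReal.coe_nonneg _

lemma entry_le_vecNormInf {N : ℕ} (v : Fin N → ℂ) (i : Fin N) : ‖v i‖ ≤ vecNormInf v := by
  have : ‖v i‖₊ ≤ Finset.univ.sup (fun i => ‖v i‖₊) :=
    Finset.le_sup (f := fun i => ‖v i‖₊) (Finset.mem_univ i)
  exact_mod_cast this

lemma vecNormInf_le {N : ℕ} (v : Fin N → ℂ) (C : ℝ) (hC : 0 ≤ C)
    (h : ∀ i, ‖v i‖ ≤ C) : vecNormInf v ≤ C := by
  lift C to NNReal using hC
  rw [vecNormInf, NNReal.coe_le_coe]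
  apply Finset.sup_le
  intro i _
  have := h i
  rw [← NNReal.coe_le_coe]
  simpa using this

lemma rowSum_le_matNormInf {N : ℕ} (M : Matrix (Fin N) (Fin N) ℂ) (i : Fin N) :
    ∑ j, ‖M i j‖ ≤ matNormInf M := by
  have : (∑ j, ‖M i j‖₊) ≤ Finset.univ.sup (fun i => ∑ j, ‖M i j‖₊) :=
    Finset.le_sup (f := fun i => ∑ j, ‖M i j‖₊) (Finset.mem_univ i)
  have := NNReal.coe_le_coe.2 this
  unfold matNormInf
  simpa [NNReal.coe_sum] using this

lemma mulVec_normInf_le {N : ℕ} (M : Matrix (Fin N) (Fin N) ℂ) (v : Fin N → ℂ) :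
    vecNormInf (M.mulVec v) ≤ matNormInf M * vecNormInf v := by
  apply vecNormInf_le _ _ (mul_nonneg (matNormInf_nonneg M) (vecNormInf_nonneg v))
  intro i
  have h1 : ‖M.mulVec v i‖ ≤ ∑ j, ‖M i j‖ * ‖v j‖ := by
    rw [Matrix.mulVec, dotProduct]
    refine le_trans (norm_sum_le _ _) ?_
    apply Finset.sum_le_sum
    intro j _
    rw [norm_mul]
  refine le_trans h1 (le_trans (Finset.sum_le_sum fun j _ =>
    mul_le_mul_of_nonneg_left (entry_le_vecNormInf v j) (norm_nonneg _)) ?_)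
  rw [← Finset.sum_mul]
  exact mul_le_mul_of_nonneg_right (rowSum_le_matNormInf M i) (vecNormInf_nonneg v)

lemma smul_normInf_le {N : ℕ} (c : ℂ) (v : Fin N → ℂ) :
    vecNormInf (c • v) ≤ ‖c‖ * vecNormInf v := by
  apply vecNormInf_le _ _ (mul_nonneg (norm_nonneg c) (vecNormInf_nonneg v))
  intro i
  simp only [Pi.smul_apply, smul_eq_mul, norm_mul]
  exact mul_le_mul_of_nonneg_left (entry_le_vecNormInf v i) (norm_nonneg _)

lemma diag_mulVec_normInf_le {N : ℕ} (d : Fin N → ℂ) (v : Fin N → ℂ) (C : ℝ)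
    (hC : 0 ≤ C) (hd : ∀ i, ‖d i‖ ≤ C) :
    vecNormInf ((Matrix.diagonal d).mulVec v) ≤ C * vecNormInf v := by
  apply vecNormInf_le _ _ (mul_nonneg hC (vecNormInf_nonneg v))
  intro i
  rw [Matrix.mulVec_diagonal, norm_mul]
  exact mul_le_mul (hd i) (entry_le_vecNormInf v i) (norm_nonneg _) hC

/-- Error bound for the DNWR iteration: if
`Π⁽ᵏ⁾ = −(√κ₁/(√κ₁+√κ₂)) P W P⁻¹ Π⁽ᵏ⁻¹⁾` with diagonal weight matrix
`W_{ii} = sinh((b−a)√λᵢ)/(sinh(b√λᵢ)cosh(a√λᵢ))` and `Re(√λᵢ) ≥ λ > 0`, then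
`‖Π⁽ᵏ⁾‖_∞ ≤ (√κ₁/(√κ₁+√κ₂))ᵏ (cosh((b−a)λ)/(sinh(aλ)sinh(bλ)))ᵏ ‖P‖_∞ ‖P⁻¹‖_∞ ‖Π⁽⁰⁾‖_∞`. -/
theorem stmt13 (N : ℕ) (hN : 1 ≤ N) (κ₁ κ₂ h₁ h₂ : ℝ)
    (hκ₁ : 0 < κ₁) (hκ₂ : 0 < κ₂) (hh₁ : 0 < h₁) (hh₂ : 0 < h₂)
    (a b : ℝ) (ha : a = h₁ / Real.sqrt κ₁) (hb : b = h₂ / Real.sqrt κ₂)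
    (P : Matrix (Fin N) (Fin N) ℂ) (hP : IsUnit P)
    (lams : Fin N → ℂ) (lam : ℝ) (hlam : 0 < lam)
    (hre : ∀ i, lam ≤ ((lams i) ^ ((1 : ℂ) / 2)).re)
    (W : Matrix (Fin N) (Fin N) ℂ)
    (hW : W = Matrix.diagonal fun i =>
      Complex.sinh (((b : ℂ) - (a : ℂ)) * (lams i) ^ ((1 : ℂ) / 2)) /
        (Complex.sinh ((b : ℂ) * (lams i) ^ ((1 : ℂ) / 2)) *
         Complex.cosh ((a : ℂ) * (lams i) ^ ((1 : ℂ) / 2))))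
    (Piv : ℕ → (Fin N → ℂ))
    (hrec : ∀ k : ℕ, 1 ≤ k → Piv k =
      (-(Real.sqrt κ₁ / (Real.sqrt κ₁ + Real.sqrt κ₂)) : ℂ) •
        (P * W * P⁻¹).mulVec (Piv (k - 1))) :
    ∀ k : ℕ, vecNormInf (Piv k) ≤
      (Real.sqrt κ₁ / (Real.sqrt κ₁ + Real.sqrt κ₂)) ^ k *
        (Real.cosh ((b - a) * lam) / (Real.sinh (a * lam) * Real.sinh (b * lam))) ^ k *
        matNormInf P * matNormInf P⁻¹ * vecNormInf (Piv 0) := by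
  have hsq1 : 0 < Real.sqrt κ₁ := Real.sqrt_pos.2 hκ₁
  have hsq2 : 0 < Real.sqrt κ₂ := Real.sqrt_pos.2 hκ₂
  set r : ℝ := Real.sqrt κ₁ / (Real.sqrt κ₁ + Real.sqrt κ₂) with hr
  set C : ℝ := Real.cosh ((b - a) * lam) / (Real.sinh (a * lam) * Real.sinh (b * lam)) with hCdef
  have ha0 : 0 < a := by rw [ha]; positivity
  have hb0 : 0 < b := by rw [hb]; positivity
  have hr0 : 0 ≤ r := by positivity
  have hC0 : 0 ≤ C := by
    have h1 : 0 < Real.sinh (a * lam) := Real.sinh_pos_iff.2 (by positivity)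
    have h2 : 0 < Real.sinh (b * lam) := Real.sinh_pos_iff.2 (by positivity)
    positivity
  have hPdet : IsUnit P.det := (Matrix.isUnit_iff_isUnit_det P).mp hP
  have hPinvP : P⁻¹ * P = 1 := Matrix.nonsing_inv_mul P hPdet
  have hPPinv : P * P⁻¹ = 1 := Matrix.mul_nonsing_inv P hPdet
  set u : ℕ → Fin N → ℂ := fun k => P⁻¹.mulVec (Piv k) with hu
  -- W entry bound
  have hWdiag : ∀ i : Fin N,
      ‖Complex.sinh (((b : ℂ) - (a : ℂ)) * (lams i) ^ ((1 : ℂ) / 2)) /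
        (Complex.sinh ((b : ℂ) * (lams i) ^ ((1 : ℂ) / 2)) *
         Complex.cosh ((a : ℂ) * (lams i) ^ ((1 : ℂ) / 2)))‖ ≤ C := fun i =>
    W_entry_bound a b lam ha0 hb0 hlam ((lams i) ^ ((1 : ℂ) / 2)) (hre i)
  -- recursion for u
  have hurec : ∀ k : ℕ, u (k + 1) = (-(r : ℂ)) • (W.mulVec (u k)) := by
    intro k
    have h := hrec (k + 1) (by omega)
    simp only [Nat.add_sub_cancel] at h
    have hscal : (-(↑(Real.sqrt κ₁) / (↑(Real.sqrt κ₁) + ↑(Real.sqrt κ₂))) : ℂ) = (-(r : ℂ)) := by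
      rw [hr]; push_cast; ring
    show P⁻¹.mulVec (Piv (k + 1)) = _
    rw [h, hscal, Matrix.mulVec_smul]
    congr 1
    show P⁻¹.mulVec ((P * W * P⁻¹).mulVec (Piv k)) = W.mulVec (P⁻¹.mulVec (Piv k))
    rw [Matrix.mulVec_mulVec, Matrix.mulVec_mulVec, ← Matrix.mul_assoc, ← Matrix.mul_assoc,
      hPinvP, Matrix.one_mul]
  -- induction bound for u
  have hub : ∀ k : ℕ, vecNormInf (u k) ≤ (r * C) ^ k * vecNormInf (u 0) := by
    intro k
    induction k with
    | zero => simp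
    | succ k ih =>
      rw [hurec k]
      calc vecNormInf ((-(r : ℂ)) • (W.mulVec (u k)))
          ≤ ‖(-(r : ℂ))‖ * vecNormInf (W.mulVec (u k)) := smul_normInf_le _ _
        _ ≤ r * (C * vecNormInf (u k)) := by
            apply mul_le_mul
            · rw [norm_neg, Complex.norm_real, Real.norm_eq_abs, abs_of_nonneg hr0]
            · rw [hW]
              exact diag_mulVec_normInf_le _ _ C hC0 hWdiag
            · exact vecNormInf_nonneg _
            · exact hr0
        _ ≤ r * (C * ((r * C) ^ k * vecNormInf (u 0))) := by
            apply mul_le_mul_of_nonneg_left _ hr0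
            exact mul_le_mul_of_nonneg_left ih hC0
        _ = (r * C) ^ (k + 1) * vecNormInf (u 0) := by ring
  intro k
  have hu0 : vecNormInf (u 0) ≤ matNormInf P⁻¹ * vecNormInf (Piv 0) :=
    mulVec_normInf_le _ _
  have hPk : Piv k = P.mulVec (u k) := by
    rw [hu, Matrix.mulVec_mulVec, hPPinv, Matrix.one_mulVec]
  calc vecNormInf (Piv k) = vecNormInf (P.mulVec (u k)) := by rw [hPk]
    _ ≤ matNormInf P * vecNormInf (u k) := mulVec_normInf_le _ _
    _ ≤ matNormInf P * ((r * C) ^ k * vecNormInf (u 0)) :=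
        mul_le_mul_of_nonneg_left (hub k) (matNormInf_nonneg _)
    _ ≤ matNormInf P * ((r * C) ^ k * (matNormInf P⁻¹ * vecNormInf (Piv 0))) := by
        apply mul_le_mul_of_nonneg_left _ (matNormInf_nonneg _)
        exact mul_le_mul_of_nonneg_left hu0 (by positivity)
    _ = r ^ k * C ^ k * matNormInf P * matNormInf P⁻¹ * vecNormInf (Piv 0) := by
        rw [mul_pow]; ring
end

section
/- Let l₁ > 0, l₂ > 0 and x₀ > 0 be real numbers and let z be a complex number with Re(z) ≥ x₀. Then |sinh(l₁z)·cosh(l₂z)/(sinh(l₂z)·cosh(l₁z)) − 1| ≤ coth(l₁x₀)·coth(l₂x₀) − 1. -/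
/-!
Since `sinh a cosh b - sinh b cosh a = sinh (a - b)`, the quantity is `sinh (a - b) / (sinh b cosh a)`
with `a = l₁ z`, `b = l₂ z`. For `w = x + iy` one has `|sinh w|² = sinh² x + sin² y` and
`|cosh w|² = sinh² x + cos² y`, so both `|sinh w|` and `|cosh w|` are at least `sinh x`, and
`|sinh w| ≤ cosh x`. With `x₁ = Re a`, `x₂ = Re b` this bounds the quotient by
`cosh (x₁ - x₂) / (sinh x₁ sinh x₂) = coth x₁ coth x₂ - 1`, and `coth` decreases on `(0, ∞)`.
-/

namespace Complex

theorem sq_norm_sinh (w : ℂ) : ‖sinh w‖ ^ 2 = Real.sinh w.re ^ 2 + Real.sin w.im ^ 2 := by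
  conv_lhs => rw [← re_add_im w]
  rw [sinh_add, sinh_mul_I, cosh_mul_I, ← ofReal_sinh, ← ofReal_cosh, ← ofReal_cos,
    ← ofReal_sin, Complex.sq_norm]
  simp only [normSq_apply, add_re, add_im, mul_re, mul_im, ofReal_re, ofReal_im, I_re, I_im]
  nlinarith [Real.sin_sq_add_cos_sq w.im, Real.cosh_sq w.re]

theorem sq_norm_cosh (w : ℂ) : ‖cosh w‖ ^ 2 = Real.sinh w.re ^ 2 + Real.cos w.im ^ 2 := by
  conv_lhs => rw [← re_add_im w]
  rw [cosh_add, sinh_mul_I, cosh_mul_I, ← ofReal_sinh, ← ofReal_cosh, ← ofReal_cos,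
    ← ofReal_sin, Complex.sq_norm]
  simp only [normSq_apply, add_re, add_im, mul_re, mul_im, ofReal_re, ofReal_im, I_re, I_im]
  nlinarith [Real.sin_sq_add_cos_sq w.im, Real.cosh_sq w.re]

theorem abs_sinh_re_le_norm_sinh (w : ℂ) : |Real.sinh w.re| ≤ ‖sinh w‖ := by
  rw [← abs_norm, ← sq_le_sq, sq_norm_sinh]
  exact le_add_of_nonneg_right (sq_nonneg _)

theorem abs_sinh_re_le_norm_cosh (w : ℂ) : |Real.sinh w.re| ≤ ‖cosh w‖ := by
  rw [← abs_norm, ← sq_le_sq, sq_norm_cosh]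
  exact le_add_of_nonneg_right (sq_nonneg _)

theorem sinh_mul_cosh_div_sub_one {a b : ℂ} (h : sinh b * cosh a ≠ 0) :
    sinh a * cosh b / (sinh b * cosh a) - 1 = sinh (a - b) / (sinh b * cosh a) := by
  rw [sinh_sub, div_sub_one h]
  ring

end Complex

namespace Real

theorem cosh_sub_div_sinh_mul_sinh {a b : ℝ} (ha : sinh a ≠ 0) (hb : sinh b ≠ 0) :
    cosh (a - b) / (sinh b * sinh a) = cosh a / sinh a * (cosh b / sinh b) - 1 := by
  rw [cosh_sub]
  field_simp

theorem antitoneOn_cosh_div_sinh : AntitoneOn (fun x => cosh x / sinh x) (Set.Ioi 0) := by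
  intro b hb a ha hab
  have hsa : 0 < sinh a := sinh_pos_iff.2 ha
  have hsb : 0 < sinh b := sinh_pos_iff.2 hb
  rw [div_le_div_iff₀ hsa hsb]
  have := sinh_nonneg_iff.2 (sub_nonneg.2 hab)
  rw [sinh_sub] at this
  linarith

end Real

open Complex in
theorem norm_sinh_mul_cosh_div_sub_one_le {a b : ℂ} (ha : 0 < a.re) (hb : 0 < b.re) :
    ‖sinh a * cosh b / (sinh b * cosh a) - 1‖ ≤
      Real.cosh a.re / Real.sinh a.re * (Real.cosh b.re / Real.sinh b.re) - 1 := by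
  have hsa : 0 < Real.sinh a.re := Real.sinh_pos_iff.2 ha
  have hsb : 0 < Real.sinh b.re := Real.sinh_pos_iff.2 hb
  have hsinh : Real.sinh b.re ≤ ‖sinh b‖ :=
    (abs_sinh_re_le_norm_sinh b).trans' (le_abs_self _)
  have hcosh : Real.sinh a.re ≤ ‖cosh a‖ :=
    (abs_sinh_re_le_norm_cosh a).trans' (le_abs_self _)
  have hden : sinh b * cosh a ≠ 0 :=
    mul_ne_zero (norm_pos_iff.1 (hsb.trans_le hsinh)) (norm_pos_iff.1 (hsa.trans_le hcosh))
  rw [sinh_mul_cosh_div_sub_one hden, norm_div, norm_mul,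
    ← Real.cosh_sub_div_sinh_mul_sinh hsa.ne' hsb.ne', ← sub_re]
  exact div_le_div₀ (Real.cosh_pos _).le (norm_sinh_le_cosh_re _) (by positivity)
    (mul_le_mul hsinh hcosh hsa.le (norm_nonneg _))

/-- For `l₁, l₂, x₀ > 0` and `Re(z) ≥ x₀`,
`|sinh(l₁z)cosh(l₂z)/(sinh(l₂z)cosh(l₁z)) − 1| ≤ coth(l₁x₀)coth(l₂x₀) − 1`. -/
theorem stmt15 (l₁ l₂ x₀ : ℝ) (h1 : 0 < l₁) (h2 : 0 < l₂) (h0 : 0 < x₀)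
    (z : ℂ) (hz : x₀ ≤ z.re) :
    ‖Complex.sinh ((l₁ : ℂ) * z) * Complex.cosh ((l₂ : ℂ) * z) /
        (Complex.sinh ((l₂ : ℂ) * z) * Complex.cosh ((l₁ : ℂ) * z)) - 1‖ ≤
      (Real.cosh (l₁ * x₀) / Real.sinh (l₁ * x₀)) *
        (Real.cosh (l₂ * x₀) / Real.sinh (l₂ * x₀)) - 1 := by
  have hzre : 0 < z.re := h0.trans_le hz
  have coth_le {l : ℝ} (hl : 0 < l) :
      Real.cosh (l * z.re) / Real.sinh (l * z.re) ≤ Real.cosh (l * x₀) / Real.sinh (l * x₀) :=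
    Real.antitoneOn_cosh_div_sinh (mul_pos hl h0) (mul_pos hl hzre)
      (mul_le_mul_of_nonneg_left hz hl.le)
  have coth_nonneg {x : ℝ} (hx : 0 < x) : 0 ≤ Real.cosh x / Real.sinh x :=
    div_nonneg (Real.cosh_pos x).le (Real.sinh_pos_iff.2 hx).le
  refine (norm_sinh_mul_cosh_div_sub_one_le ?_ ?_).trans ?_
  · simpa [Complex.re_ofReal_mul] using mul_pos h1 hzre
  · simpa [Complex.re_ofReal_mul] using mul_pos h2 hzre
  simp only [Complex.re_ofReal_mul]
  gcongr ?_ - 1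
  exact mul_le_mul (coth_le h1) (coth_le h2) (coth_nonneg (mul_pos h2 hzre))
    (coth_nonneg (mul_pos h1 h0))
end

section
/- Let l₀, l₁, l₂ > 0 and x₀ > 0 be real numbers, let ρ₁, ρ₂ ≥ 0 be real numbers, and let z be a complex number with Re(z) ≥ x₀. Then |(1/sinh(l₀z))·(ρ₁·cosh(l₁z)/sinh(l₁z) − ρ₂·sinh(l₂z)/cosh(l₂z))| ≤ (1/sinh(l₀x₀))·(ρ₁·coth(l₁x₀) + ρ₂·coth(l₂x₀)). -/
/-! Writing `w = x + iy`, one has `‖sinh w‖² = sinh² x + sin² y` and `‖cosh w‖² = sinh² x + cos² y`,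
so both norms lie between `sinh x` and `cosh x`. Hence `‖coth w‖` and `‖tanh w‖` are at most
`coth x`, and `‖1 / sinh w‖ ≤ 1 / sinh x`; since `coth` and `1 / sinh` decrease on `(0, ∞)`, each
factor is bounded by its value at `l x₀`. -/

theorem Real.cosh_div_sinh_le_cosh_div_sinh {a b : ℝ} (hb : 0 < b) (hba : b ≤ a) :
    Real.cosh a / Real.sinh a ≤ Real.cosh b / Real.sinh b := by
  rw [div_le_div_iff₀ (Real.sinh_pos_iff.2 (hb.trans_le hba)) (Real.sinh_pos_iff.2 hb)]
  have : 0 ≤ Real.sinh (a - b) := Real.sinh_nonneg_iff.2 (sub_nonneg.2 hba)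
  rw [Real.sinh_sub] at this
  linarith

namespace Complex

theorem norm_cosh_le_cosh_re (w : ℂ) : ‖cosh w‖ ≤ Real.cosh w.re :=
  (sq_le_sq₀ (norm_nonneg _) (Real.cosh_pos _).le).1 <| by
    rw [sq_norm_cosh, Real.cosh_sq]; nlinarith [Real.cos_sq_le_one w.im]

theorem norm_cosh_div_sinh_le {w : ℂ} (hw : 0 < w.re) :
    ‖cosh w / sinh w‖ ≤ Real.cosh w.re / Real.sinh w.re := by
  have hs : 0 < Real.sinh w.re := Real.sinh_pos_iff.2 hw
  rw [norm_div]
  exact div_le_div₀ (Real.cosh_pos _).le (norm_cosh_le_cosh_re w) hs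
    ((abs_of_pos hs).symm.trans_le (abs_sinh_re_le_norm_sinh w))

theorem norm_sinh_div_cosh_le {w : ℂ} (hw : 0 < w.re) :
    ‖sinh w / cosh w‖ ≤ Real.cosh w.re / Real.sinh w.re := by
  have hs : 0 < Real.sinh w.re := Real.sinh_pos_iff.2 hw
  rw [norm_div]
  exact div_le_div₀ (Real.cosh_pos _).le (norm_sinh_le_cosh_re w) hs
    ((abs_of_pos hs).symm.trans_le (abs_sinh_re_le_norm_cosh w))

theorem norm_cosh_div_sinh_le_of_le_re {w : ℂ} {x : ℝ} (hx : 0 < x) (hxw : x ≤ w.re) :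
    ‖cosh w / sinh w‖ ≤ Real.cosh x / Real.sinh x :=
  (norm_cosh_div_sinh_le (hx.trans_le hxw)).trans (Real.cosh_div_sinh_le_cosh_div_sinh hx hxw)

theorem norm_sinh_div_cosh_le_of_le_re {w : ℂ} {x : ℝ} (hx : 0 < x) (hxw : x ≤ w.re) :
    ‖sinh w / cosh w‖ ≤ Real.cosh x / Real.sinh x :=
  (norm_sinh_div_cosh_le (hx.trans_le hxw)).trans (Real.cosh_div_sinh_le_cosh_div_sinh hx hxw)

theorem norm_one_div_sinh_le_of_le_re {w : ℂ} {x : ℝ} (hx : 0 < x) (hxw : x ≤ w.re) :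
    ‖1 / sinh w‖ ≤ 1 / Real.sinh x := by
  rw [norm_div, norm_one]
  gcongr
  exact (Real.sinh_le_sinh.2 hxw).trans ((le_abs_self _).trans (abs_sinh_re_le_norm_sinh w))

end Complex

/-- For `l₀, l₁, l₂, x₀ > 0`, `ρ₁, ρ₂ ≥ 0` and `Re(z) ≥ x₀`,
`|(1/sinh(l₀z))(ρ₁ cosh(l₁z)/sinh(l₁z) − ρ₂ sinh(l₂z)/cosh(l₂z))|
  ≤ (1/sinh(l₀x₀))(ρ₁ coth(l₁x₀) + ρ₂ coth(l₂x₀))`. -/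
theorem stmt18 (l₀ l₁ l₂ x₀ : ℝ) (h0' : 0 < l₀) (h1 : 0 < l₁) (h2 : 0 < l₂) (h0 : 0 < x₀)
    (ρ₁ ρ₂ : ℝ) (hρ₁ : 0 ≤ ρ₁) (hρ₂ : 0 ≤ ρ₂)
    (z : ℂ) (hz : x₀ ≤ z.re) :
    ‖(1 / Complex.sinh ((l₀ : ℂ) * z)) *
        ((ρ₁ : ℂ) * Complex.cosh ((l₁ : ℂ) * z) / Complex.sinh ((l₁ : ℂ) * z) -
         (ρ₂ : ℂ) * Complex.sinh ((l₂ : ℂ) * z) / Complex.cosh ((l₂ : ℂ) * z))‖ ≤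
      (1 / Real.sinh (l₀ * x₀)) *
        (ρ₁ * (Real.cosh (l₁ * x₀) / Real.sinh (l₁ * x₀)) +
         ρ₂ * (Real.cosh (l₂ * x₀) / Real.sinh (l₂ * x₀))) := by
  have hre {l : ℝ} (hl : 0 < l) : l * x₀ ≤ ((l : ℂ) * z).re := by
    rw [Complex.re_ofReal_mul]; exact mul_le_mul_of_nonneg_left hz hl.le
  rw [norm_mul, mul_div_assoc, mul_div_assoc]
  gcongr
  · exact Complex.norm_one_div_sinh_le_of_le_re (by positivity) (hre h0')
  calc _ ≤ ‖(ρ₁ : ℂ) * (Complex.cosh (l₁ * z) / Complex.sinh (l₁ * z))‖ +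
        ‖(ρ₂ : ℂ) * (Complex.sinh (l₂ * z) / Complex.cosh (l₂ * z))‖ := norm_sub_le _ _
    _ ≤ _ := by
      rw [norm_mul, norm_mul, Complex.norm_of_nonneg hρ₁, Complex.norm_of_nonneg hρ₂]
      gcongr
      · exact Complex.norm_cosh_div_sinh_le_of_le_re (by positivity) (hre h1)
      · exact Complex.norm_sinh_div_cosh_le_of_le_re (by positivity) (hre h2)
end
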